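/- arXiv:2102.09220 — 2 statements merged into one kernel-verified Lean document; each statement's English description precedes it below -/
import Mathlib

section
/- For every natural number n ≥ 1: the symbol with rows (n−1,…,1) and (n−1,…,0) has rank n−1, and the symbol with rows (n−2,…,1) and (n,…,0) has rank n. Hence the minimum of twice these ranks is 2n−2. -/
/-- rank of a symbol with rows `A`, `B`:
`ΣA + ΣB − ⌊(m₁+m₂−1)²/4⌋` (floor division of naturals). -/
def rk (A B : List ℕ) : ℤ :=
  (A.sum : ℤ) + (B.sum : ℤ) - (((A.length + B.length - 1) ^ 2 / 4 : ℕ) : ℤ)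

/-- the list `[m-1, m-2, …, 0]` (empty if `m = 0`). -/
def drow (m : ℕ) : List ℕ := (List.range m).reverse

/-- the list `[m, m-1, …, 1]` (empty if `m = 0`). -/
def drow1 (m : ℕ) : List ℕ := ((List.range m).reverse).map (· + 1)

lemma drow_len (m : ℕ) : (drow m).length = m := by simp [drow]

lemma drow1_len (m : ℕ) : (drow1 m).length = m := by simp [drow1]

lemma drow_sum (m : ℕ) : 2 * (drow m).sum + m = m * m := by
  induction m with
  | zero => simp [drow]
  | succ k ih =>
    have h : drow (k+1) = k :: drow k := by simp [drow, List.range_succ]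
    rw [h, List.sum_cons]
    nlinarith [ih]

lemma map_succ_sum (l : List ℕ) : (l.map (· + 1)).sum = l.sum + l.length := by
  induction l with
  | nil => simp
  | cons a l ih => simp [ih]; ring

lemma drow1_sum (m : ℕ) : (drow1 m).sum = (drow m).sum + m := by
  rw [drow1, ← drow, map_succ_sum, drow_len]

lemma sq_div (k : ℕ) : ((2 * k) ^ 2 / 4 : ℕ) = k * k := by
  have : (2 * k) ^ 2 = 4 * (k * k) := by ring
  rw [this, Nat.mul_div_cancel_left _ (by norm_num)]

theorem stmt7 (n : ℕ) (hn : 1 ≤ n) :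
    rk (drow1 (n - 1)) (drow n) = (n : ℤ) - 1 ∧
    rk (drow1 (n - 2)) (drow (n + 1)) = (n : ℤ) ∧
    min (2 * ((n : ℤ) - 1)) (2 * (n : ℤ)) = 2 * (n : ℤ) - 2 := by
  refine ⟨?_, ?_, by omega⟩
  · obtain ⟨k, rfl⟩ : ∃ k, n = k + 1 := ⟨n - 1, by omega⟩
    have hs := drow_sum k
    unfold rk
    rw [drow1_len, drow_len, drow1_sum]
    have hlen : (k + 1 - 1 + (k + 1) - 1) = 2 * k := by omega
    rw [hlen, sq_div]
    have hs2 := drow_sum (k + 1)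
    have hs' : (2:ℤ) * (drow k).sum + k = k * k := by exact_mod_cast hs
    have hs2' : (2:ℤ) * (drow (k+1)).sum + (k+1) = (k+1) * (k+1) := by exact_mod_cast hs2
    push_cast [Nat.add_sub_cancel]
    nlinarith [hs', hs2']
  · rcases Nat.lt_or_ge n 2 with h | h
    · interval_cases n
      decide
    · obtain ⟨k, rfl⟩ : ∃ k, n = k + 2 := ⟨n - 2, by omega⟩
      have hs := drow_sum k
      have hs2 := drow_sum (k + 3)
      unfold rk
      rw [drow1_len, drow_len, drow1_sum]
      simp only [Nat.add_sub_cancel]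
      have hlen : k + (k + 2 + 1) - 1 = 2 * (k + 1) := by omega
      rw [hlen, sq_div]
      have hs' : (2:ℤ) * (drow k).sum + k = k * k := by exact_mod_cast hs
      have hs2' : (2:ℤ) * (drow (k+3)).sum + (k+3) = (k+3) * (k+3) := by exact_mod_cast hs2
      push_cast
      nlinarith [hs', hs2']
end

section
/- Let A = (a₁,…,a_{m₁}) and B = (b₁,…,b_{m₂}) be strictly decreasing sequences of natural numbers, both nonempty, and define Θrk(A,B) = min{ 2·rk(B, (a₂,…,a_{m₁})), 2·rk((b₂,…,b_{m₂}), A) }. Then Θrk is invariant under the shift: Θrk((a₁+1,…,a_{m₁}+1,0),(b₁+1,…,b_{m₂}+1,0)) = Θrk(A,B). -/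
/-- the Θ-rank of a symbol with rows `A`, `B` (both assumed nonempty). -/
def thetaRk (A B : List ℕ) : ℤ :=
  min (2 * rk B A.tail) (2 * rk B.tail A)

lemma sum_map_succ (X : List ℕ) : (X.map (· + 1)).sum = X.sum + X.length := by
  induction X with
  | nil => simp
  | cons a as ih => simp [ih]; omega

lemma rk_shift (X Y : List ℕ) (h : 1 ≤ X.length + Y.length) :
    rk (X.map (· + 1) ++ [0]) (Y.map (· + 1) ++ [0]) = rk X Y := by
  obtain ⟨k, hk⟩ : ∃ k, X.length + Y.length = k + 1 := ⟨X.length + Y.length - 1, by omega⟩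
  have hsq : (k + 2) ^ 2 = k ^ 2 + 4 * k + 4 := by ring
  have hdiv : ((k + 2) ^ 2) / 4 = k ^ 2 / 4 + (k + 1) := by omega
  unfold rk
  have hl1 : (X.map (· + 1) ++ [0]).length + (Y.map (· + 1) ++ [0]).length - 1 = k + 2 := by
    simp; omega
  have hl2 : X.length + Y.length - 1 = k := by omega
  have hs1 : (X.map (· + 1) ++ [0]).sum = X.sum + X.length := by simp [sum_map_succ]
  have hs2 : (Y.map (· + 1) ++ [0]).sum = Y.sum + Y.length := by simp [sum_map_succ]
  rw [hl1, hl2, hdiv, hs1, hs2]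
  push_cast
  have hk' : (X.length : ℤ) + (Y.length : ℤ) = k + 1 := by exact_mod_cast hk
  linarith

theorem stmt16 (A B : List ℕ)
    (hA : A.Chain' (· > ·)) (hB : B.Chain' (· > ·))
    (hAne : A ≠ []) (hBne : B ≠ []) :
    thetaRk (A.map (· + 1) ++ [0]) (B.map (· + 1) ++ [0]) = thetaRk A B := by
  obtain ⟨a, as, rfl⟩ := List.exists_cons_of_ne_nil hAne
  obtain ⟨b, bs, rfl⟩ := List.exists_cons_of_ne_nil hBne
  unfold thetaRk
  have h1 : ((((a :: as).map (· + 1)) ++ [0]).tail) = as.map (· + 1) ++ [0] := by simp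
  have h2 : ((((b :: bs).map (· + 1)) ++ [0]).tail) = bs.map (· + 1) ++ [0] := by simp
  rw [h1, h2, rk_shift _ _ (by simp; omega), rk_shift _ _ (by simp; omega)]
  simp
end
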